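/- arXiv:2505.11260 — 3 statements merged into one kernel-verified Lean document; each statement's English description precedes it below -/
import Mathlib

section
/- For any positive integrable random variables X and Y with finite variance, E[max(X,Y)] ≤ (max(E[X], E[Y])) · (1 + √(Var X)/E[X] + √(Var Y)/E[Y]). -/
open MeasureTheory ProbabilityTheory Real

lemma abs_dev_le_sqrt_variance
    {Ω : Type*} [MeasurableSpace Ω] (μ : Measure Ω) [IsProbabilityMeasure μ]
    (X : Ω → ℝ) (hX2 : MemLp X 2 μ) :
    ∫ ω, |X ω - ∫ ω, X ω ∂μ| ∂μ ≤ Real.sqrt (variance X μ) := by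
  set m := ∫ ω, X ω ∂μ with hm
  have hconj : (2:ℝ).HolderConjugate 2 := ⟨by norm_num, by norm_num, by norm_num⟩
  have hf : MemLp (fun ω => |X ω - m|) (ENNReal.ofReal 2) μ := by
    have : (ENNReal.ofReal 2) = 2 := by norm_num
    rw [this]
    exact (hX2.sub (memLp_const m)).abs
  have hg : MemLp (fun _ : Ω => (1:ℝ)) (ENNReal.ofReal 2) μ := memLp_const 1
  have h := integral_mul_le_Lp_mul_Lq_of_nonneg hconj
    (ae_of_all _ fun ω => abs_nonneg (X ω - m)) (ae_of_all _ fun _ => zero_le_one) hf hg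
  simp only [mul_one, one_pow] at h
  have h1 : ∫ (_ : Ω), (1:ℝ) ∂μ = 1 := by simp
  have h2 : ∫ ω, |X ω - m| ^ (2:ℝ) ∂μ = ∫ ω, (X ω - m) ^ (2:ℕ) ∂μ := by
    refine integral_congr_ae (ae_of_all _ fun ω => ?_)
    show |X ω - m| ^ (2:ℝ) = (X ω - m) ^ (2:ℕ)
    rw [Real.rpow_two, sq_abs]
  have hone : ∫ ω, (1:ℝ) ^ (2:ℝ) ∂μ = 1 := by simp
  rw [hone, h2] at h
  have hvar : variance X μ = ∫ ω, (X ω - m) ^ (2:ℕ) ∂μ := by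
    rw [variance_eq_integral hX2.aemeasurable]
  calc ∫ ω, |X ω - m| ∂μ
      ≤ (∫ ω, (X ω - m) ^ (2:ℕ) ∂μ) ^ ((1:ℝ)/2) * 1 ^ ((1:ℝ)/2) := h
    _ = Real.sqrt (variance X μ) := by
        rw [one_rpow, mul_one, hvar, ← Real.sqrt_eq_rpow]

/-- For positive random variables with finite second moments,
`E[max(X,Y)] ≤ max(E X, E Y) · (1 + √Var X / E X + √Var Y / E Y)`. -/
theorem stmt2
    {Ω : Type*} [MeasurableSpace Ω] (μ : Measure Ω) [IsProbabilityMeasure μ]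
    (X Y : Ω → ℝ) (hX : ∀ ω, 0 < X ω) (hY : ∀ ω, 0 < Y ω)
    (hX2 : MemLp X 2 μ) (hY2 : MemLp Y 2 μ) :
    ∫ ω, max (X ω) (Y ω) ∂μ ≤
      max (∫ ω, X ω ∂μ) (∫ ω, Y ω ∂μ) *
        (1 + Real.sqrt (variance X μ) / (∫ ω, X ω ∂μ) +
             Real.sqrt (variance Y μ) / (∫ ω, Y ω ∂μ)) := by
  have hXi : Integrable X μ := hX2.integrable one_le_two
  have hYi : Integrable Y μ := hY2.integrable one_le_two
  set mX := ∫ ω, X ω ∂μ with hmX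
  set mY := ∫ ω, Y ω ∂μ with hmY
  have hmXpos : 0 < mX := by
    rw [hmX, integral_pos_iff_support_of_nonneg (fun ω => (hX ω).le) hXi]
    have : Function.support X = Set.univ := by
      ext ω; simp [Function.support, (hX ω).ne']
    rw [this]
    simp
  have hmYpos : 0 < mY := by
    rw [hmY, integral_pos_iff_support_of_nonneg (fun ω => (hY ω).le) hYi]
    have : Function.support Y = Set.univ := by
      ext ω; simp [Function.support, (hY ω).ne']
    rw [this]
    simp
  have hXa : Integrable (fun ω => |X ω - mX|) μ := (hXi.sub (integrable_const mX)).abs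
  have hYa : Integrable (fun ω => |Y ω - mY|) μ := (hYi.sub (integrable_const mY)).abs
  have hmax : Integrable (fun ω => max (X ω) (Y ω)) μ := hXi.sup hYi
  have hstep : ∫ ω, max (X ω) (Y ω) ∂μ ≤
      max mX mY + (∫ ω, |X ω - mX| ∂μ) + ∫ ω, |Y ω - mY| ∂μ := by
    have hRHS : Integrable (fun ω => max mX mY + |X ω - mX| + |Y ω - mY|) μ :=
      ((integrable_const (max mX mY)).add hXa).add hYa
    have hmono : ∫ ω, max (X ω) (Y ω) ∂μ ≤
        ∫ ω, (max mX mY + |X ω - mX| + |Y ω - mY|) ∂μ := by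
      refine integral_mono hmax hRHS fun ω => ?_
      have h1 := le_abs_self (X ω - mX)
      have h2 := le_abs_self (Y ω - mY)
      have h3 := abs_nonneg (X ω - mX)
      have h4 := abs_nonneg (Y ω - mY)
      have h5 : mX ≤ max mX mY := le_max_left _ _
      have h6 : mY ≤ max mX mY := le_max_right _ _
      apply max_le <;> linarith
    calc ∫ ω, max (X ω) (Y ω) ∂μ
        ≤ ∫ ω, (max mX mY + |X ω - mX| + |Y ω - mY|) ∂μ := hmono
      _ = max mX mY + (∫ ω, |X ω - mX| ∂μ) + ∫ ω, |Y ω - mY| ∂μ := by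
          have hA : Integrable (fun ω => max mX mY + |X ω - mX|) μ :=
            (integrable_const _).add hXa
          rw [integral_add hA hYa, integral_add (integrable_const _) hXa, integral_const]
          simp
  have hCSX : ∫ ω, |X ω - mX| ∂μ ≤ Real.sqrt (variance X μ) :=
    abs_dev_le_sqrt_variance μ X hX2
  have hCSY : ∫ ω, |Y ω - mY| ∂μ ≤ Real.sqrt (variance Y μ) :=
    abs_dev_le_sqrt_variance μ Y hY2
  have hsX : Real.sqrt (variance X μ) = mX * (Real.sqrt (variance X μ) / mX) := by
    field_simp
  have hsY : Real.sqrt (variance Y μ) = mY * (Real.sqrt (variance Y μ) / mY) := by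
    field_simp
  have hdX : 0 ≤ Real.sqrt (variance X μ) / mX := by positivity
  have hdY : 0 ≤ Real.sqrt (variance Y μ) / mY := by positivity
  have h7 : Real.sqrt (variance X μ) ≤ max mX mY * (Real.sqrt (variance X μ) / mX) := by
    have := mul_le_mul_of_nonneg_right (le_max_left mX mY) hdX
    rwa [← hsX] at this
  have h8 : Real.sqrt (variance Y μ) ≤ max mX mY * (Real.sqrt (variance Y μ) / mY) := by
    have := mul_le_mul_of_nonneg_right (le_max_right mX mY) hdY
    rwa [← hsY] at this
  calc ∫ ω, max (X ω) (Y ω) ∂μ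
      ≤ max mX mY + (∫ ω, |X ω - mX| ∂μ) + ∫ ω, |Y ω - mY| ∂μ := hstep
    _ ≤ max mX mY + max mX mY * (Real.sqrt (variance X μ) / mX)
        + max mX mY * (Real.sqrt (variance Y μ) / mY) := by
        gcongr <;> [exact hCSX.trans h7; exact hCSY.trans h8]
    _ = max mX mY * (1 + Real.sqrt (variance X μ) / mX + Real.sqrt (variance Y μ) / mY) := by
        ring
end

section
/- Concentration for Lipschitz functionals of independent random variables via Chernoff bounds: let X = (X₁,…,X_n) be independent real random variables such that the symmetrised cumulant generating functions φ_i(λ) = log E[e^{λX_i}] + log E[e^{−λX_i}] are finite on open neighborhoods of 0. Let f : ℝⁿ → ℝ satisfy |f(x) − f(y)| ≤ Σ_i c_i|x_i − y_i| for constants c_i ≥ 0. Then for every λ ≥ 0 with λc_i in the domain of φ_i for all i, and every t > 0: P[f(X) − E f(X) > t] ≤ exp(−λt + Σ_{i=1}^n φ_i(λ c_i)). -/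
open MeasureTheory ProbabilityTheory Real
open scoped ENNReal


lemma exp_abs_le' (s x : ℝ) : exp (s * |x|) ≤ exp (s * x) + exp (-(s * x)) := by
  rcases abs_cases x with ⟨h, _⟩ | ⟨h, _⟩
  · rw [h]; nlinarith [exp_pos (-(s * x))]
  · rw [h, mul_neg, ← neg_mul, neg_mul]
    nlinarith [exp_pos (s * x)]

lemma mul_abs_le' (s x : ℝ) : s * |x| ≤ exp (s * x) + exp (-(s * x)) :=
  le_trans (by linarith [Real.add_one_le_exp (s * |x|)]) (exp_abs_le' s x)

-- Jensen via tangent line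
lemma exp_integral_le' {α : Type*} [MeasurableSpace α] (ν : Measure α) [IsProbabilityMeasure ν]
    (φ : α → ℝ) (hφ : Integrable φ ν) (hexp : Integrable (fun a => exp (φ a)) ν) :
    exp (∫ a, φ a ∂ν) ≤ ∫ a, exp (φ a) ∂ν := by
  set m := ∫ a, φ a ∂ν with hm
  have h1 : ∀ a, exp m * (φ a - m + 1) ≤ exp (φ a) := by
    intro a
    have := Real.add_one_le_exp (φ a - m)
    calc exp m * (φ a - m + 1) ≤ exp m * exp (φ a - m) := by
          nlinarith [exp_pos m]
      _ = exp (φ a) := by rw [← Real.exp_add]; ring_nf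
  have hsub : Integrable (fun a => φ a - m) ν := hφ.sub (integrable_const m)
  have hint1 : Integrable (fun a => exp m * (φ a - m + 1)) ν :=
    (hsub.add (integrable_const 1)).const_mul _
  calc exp m = exp m * ((m - m) + 1) := by ring
    _ = ∫ a, exp m * (φ a - m + 1) ∂ν := by
        rw [integral_const_mul]
        congr 1
        rw [integral_add hsub (integrable_const 1), integral_sub hφ (integrable_const m)]
        simp [hm]
    _ ≤ ∫ a, exp (φ a) ∂ν := integral_mono hint1 hexp h1

lemma oneDim (ν : Measure ℝ) [IsProbabilityMeasure ν] (c lam : ℝ) (hc : 0 ≤ c) (hlam : 0 < lam)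
    (h : ℝ → ℝ) (hh : Measurable h) (hLip : ∀ a b, |h a - h b| ≤ c * |a - b|)
    (h1 : Integrable (fun x => exp (lam * c * x)) ν)
    (h2 : Integrable (fun x => exp (-(lam * c) * x)) ν) :
    Integrable h ν ∧ Integrable (fun x => exp (lam * h x)) ν ∧
    ∫ x, exp (lam * h x) ∂ν ≤ exp (lam * ∫ x, h x ∂ν) *
      ((∫ x, exp (lam * c * x) ∂ν) * (∫ x, exp (-(lam * c) * x) ∂ν)) := by
  have habs : ∀ x : ℝ, c * |x| ≤ (exp (lam * c * x) + exp (-(lam * c) * x)) / lam := by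
    intro x
    rw [le_div_iff₀ hlam]
    calc c * |x| * lam = lam * c * |x| := by ring
      _ ≤ exp (lam * c * x) + exp (-(lam * c * x)) := mul_abs_le' (lam * c) x
      _ = exp (lam * c * x) + exp (-(lam * c) * x) := by rw [neg_mul]
  have hInt_abs : Integrable (fun x => c * |x|) ν := by
    refine Integrable.mono' ((h1.add h2).div_const lam)
      ((measurable_id.abs.const_mul c).aestronglyMeasurable) (ae_of_all _ fun x => ?_)
    rw [Real.norm_eq_abs, abs_of_nonneg (by positivity)]
    exact habs x
  have hub : ∀ x, |h x| ≤ |h 0| + c * |x| := by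
    intro x
    have h3 := hLip x 0
    rw [sub_zero] at h3
    have h4 : |h x| - |h 0| ≤ |h x - h 0| := abs_sub_abs_le_abs_sub _ _
    linarith
  have hInth : Integrable h ν := by
    refine Integrable.mono' ((integrable_const |h 0|).add hInt_abs)
      hh.aestronglyMeasurable (ae_of_all _ fun x => ?_)
    rw [Real.norm_eq_abs]; exact hub x
  have hkey1 : ∀ x, lam * h x ≤ lam * h 0 + lam * c * |x| := by
    intro x
    have h3 := hLip x 0; rw [sub_zero] at h3
    have h4 : h x - h 0 ≤ |h x - h 0| := le_abs_self _
    nlinarith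
  have hkey2 : ∀ x, -(lam * h x) ≤ -(lam * h 0) + lam * c * |x| := by
    intro x
    have h3 := hLip x 0; rw [sub_zero] at h3
    have h6 : h 0 - h x ≤ |h x - h 0| := by
      rw [abs_sub_comm]; exact le_abs_self _
    nlinarith
  have hexp_bnd : ∀ (K : ℝ) x, exp (K + lam * c * |x|)
      ≤ exp K * (exp (lam * c * x) + exp (-(lam * c) * x)) := by
    intro K x
    rw [Real.exp_add]
    have := exp_abs_le' (lam * c) x
    rw [neg_mul]
    exact mul_le_mul_of_nonneg_left this (exp_pos K).le
  have hInt_exp : Integrable (fun x => exp (lam * h x)) ν := by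
    refine Integrable.mono' (((h1.add h2).const_mul (exp (lam * h 0))))
      ((hh.const_mul lam).exp.aestronglyMeasurable) (ae_of_all _ fun x => ?_)
    rw [Real.norm_eq_abs, abs_of_pos (exp_pos _)]
    calc exp (lam * h x) ≤ exp (lam * h 0 + lam * c * |x|) := exp_le_exp.2 (hkey1 x)
      _ ≤ exp (lam * h 0) * (exp (lam * c * x) + exp (-(lam * c) * x)) := hexp_bnd _ x
  have hInt_expneg : Integrable (fun x => exp (-(lam * h x))) ν := by
    refine Integrable.mono' (((h1.add h2).const_mul (exp (-(lam * h 0)))))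
      (((hh.const_mul lam).neg.exp).aestronglyMeasurable) (ae_of_all _ fun x => ?_)
    rw [Real.norm_eq_abs, abs_of_pos (exp_pos _)]
    calc exp (-(lam * h x)) ≤ exp (-(lam * h 0) + lam * c * |x|) := exp_le_exp.2 (hkey2 x)
      _ ≤ exp (-(lam * h 0)) * (exp (lam * c * x) + exp (-(lam * c) * x)) := hexp_bnd _ x
  refine ⟨hInth, hInt_exp, ?_⟩
  set A := ∫ x, exp (lam * h x) ∂ν with hA
  set B := ∫ x, exp (-(lam * h x)) ∂ν with hB
  set Mp := ∫ x, exp (lam * c * x) ∂ν with hMp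
  set Mm := ∫ x, exp (-(lam * c) * x) ∂ν with hMm
  set m := ∫ x, h x ∂ν with hm
  have hApos : 0 ≤ A := integral_nonneg fun x => (exp_pos _).le
  have hBpos : 0 ≤ B := integral_nonneg fun x => (exp_pos _).le
  have hJ : exp (-(lam * m)) ≤ B := by
    have hint : Integrable (fun x => -(lam * h x)) ν := (hInth.const_mul lam).neg
    have := exp_integral_le' ν (fun x => -(lam * h x)) hint hInt_expneg
    rwa [integral_neg, integral_const_mul, ← hm] at this
  -- pointwise cosh comparison after integrating out b
  have key : ∀ a, exp (lam * h a) * (B / 2) + exp (-(lam * h a)) * (A / 2)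
      ≤ exp (lam * c * a) * (Mm / 2) + exp (-(lam * c) * a) * (Mp / 2) := by
    intro a
    have coshL : ∀ b, Real.cosh (lam * h a - lam * h b)
        = exp (lam * h a) / 2 * exp (-(lam * h b)) + exp (-(lam * h a)) / 2 * exp (lam * h b) := by
      intro b
      rw [Real.cosh_eq, neg_sub, Real.exp_sub, Real.exp_sub, Real.exp_neg, Real.exp_neg]
      field_simp
    have coshR : ∀ b, Real.cosh (lam * c * a - lam * c * b)
        = exp (lam * c * a) / 2 * exp (-(lam * c) * b)
          + exp (-(lam * c) * a) / 2 * exp (lam * c * b) := by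
      intro b
      rw [neg_mul, neg_mul, Real.cosh_eq, neg_sub, Real.exp_sub, Real.exp_sub, Real.exp_neg,
        Real.exp_neg]
      field_simp
    have intL : Integrable (fun b => Real.cosh (lam * h a - lam * h b)) ν := by
      refine Integrable.congr ?_ (ae_of_all _ fun b => (coshL b).symm)
      exact (hInt_expneg.const_mul _).add (hInt_exp.const_mul _)
    have intR : Integrable (fun b => Real.cosh (lam * c * a - lam * c * b)) ν := by
      refine Integrable.congr ?_ (ae_of_all _ fun b => (coshR b).symm)
      exact (h2.const_mul _).add (h1.const_mul _)
    have hLHS : exp (lam * h a) * (B / 2) + exp (-(lam * h a)) * (A / 2)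
        = ∫ b, Real.cosh (lam * h a - lam * h b) ∂ν := by
      calc exp (lam * h a) * (B / 2) + exp (-(lam * h a)) * (A / 2)
          = exp (lam * h a) / 2 * B + exp (-(lam * h a)) / 2 * A := by ring
        _ = ∫ b, (exp (lam * h a) / 2 * exp (-(lam * h b))
              + exp (-(lam * h a)) / 2 * exp (lam * h b)) ∂ν := by
            rw [integral_add (hInt_expneg.const_mul _) (hInt_exp.const_mul _),
              integral_const_mul, integral_const_mul]
        _ = ∫ b, Real.cosh (lam * h a - lam * h b) ∂ν := by
            congr 1; funext b; rw [coshL b]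
    have hRHS : exp (lam * c * a) * (Mm / 2) + exp (-(lam * c) * a) * (Mp / 2)
        = ∫ b, Real.cosh (lam * c * a - lam * c * b) ∂ν := by
      calc exp (lam * c * a) * (Mm / 2) + exp (-(lam * c) * a) * (Mp / 2)
          = exp (lam * c * a) / 2 * Mm + exp (-(lam * c) * a) / 2 * Mp := by ring
        _ = ∫ b, (exp (lam * c * a) / 2 * exp (-(lam * c) * b)
              + exp (-(lam * c) * a) / 2 * exp (lam * c * b)) ∂ν := by
            rw [integral_add (h2.const_mul _) (h1.const_mul _),
              integral_const_mul, integral_const_mul]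
        _ = ∫ b, Real.cosh (lam * c * a - lam * c * b) ∂ν := by
            congr 1; funext b; rw [coshR b]
    rw [hLHS, hRHS]
    refine integral_mono intL intR fun b => ?_
    refine Real.cosh_le_cosh.2 ?_
    have e1 : lam * h a - lam * h b = lam * (h a - h b) := by ring
    have e2 : lam * c * a - lam * c * b = (lam * c) * (a - b) := by ring
    rw [e1, e2, abs_mul, abs_mul, abs_of_nonneg hlam.le, abs_of_nonneg (mul_nonneg hlam.le hc)]
    calc lam * |h a - h b| ≤ lam * (c * |a - b|) :=
          mul_le_mul_of_nonneg_left (hLip a b) hlam.le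
      _ = lam * c * |a - b| := by ring
  have stepB : A * B ≤ Mp * Mm := by
    have e1 : ∫ a, (exp (lam * h a) * (B / 2) + exp (-(lam * h a)) * (A / 2)) ∂ν = A * B := by
      rw [integral_add (hInt_exp.mul_const _) (hInt_expneg.mul_const _),
        integral_mul_const, integral_mul_const, ← hA, ← hB]
      ring
    have e2 : ∫ a, (exp (lam * c * a) * (Mm / 2) + exp (-(lam * c) * a) * (Mp / 2)) ∂ν
        = Mp * Mm := by
      rw [integral_add (h1.mul_const _) (h2.mul_const _),
        integral_mul_const, integral_mul_const, ← hMp, ← hMm]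
      ring
    calc A * B = _ := e1.symm
      _ ≤ ∫ a, (exp (lam * c * a) * (Mm / 2) + exp (-(lam * c) * a) * (Mp / 2)) ∂ν :=
          integral_mono ((hInt_exp.mul_const _).add (hInt_expneg.mul_const _))
            ((h1.mul_const _).add (h2.mul_const _)) key
      _ = Mp * Mm := e2
  calc A = exp (lam * m) * (exp (-(lam * m)) * A) := by
        rw [← mul_assoc, ← Real.exp_add]; simp
    _ ≤ exp (lam * m) * (B * A) :=
        mul_le_mul_of_nonneg_left (mul_le_mul_of_nonneg_right hJ hApos) (exp_pos _).le
    _ = exp (lam * m) * (A * B) := by ring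
    _ ≤ exp (lam * m) * (Mp * Mm) := mul_le_mul_of_nonneg_left stepB (exp_pos _).le

lemma pi_map_eval {n : ℕ} (ν : Fin n → Measure ℝ) [∀ i, IsProbabilityMeasure (ν i)] (i : Fin n) :
    (Measure.pi ν).map (Function.eval i) = ν i := by
  ext s hs
  rw [Measure.map_apply (measurable_pi_apply i) hs, Set.eval_preimage, Measure.pi_pi,
    Finset.prod_eq_single i (fun j _ hj => by simp [Function.update_of_ne hj])
      (fun h => absurd (Finset.mem_univ i) h)]
  simp

lemma integrable_eval {n : ℕ} (ν : Fin n → Measure ℝ) [∀ i, IsProbabilityMeasure (ν i)]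
    (i : Fin n) (G : ℝ → ℝ) (hGm : Measurable G) (hG : Integrable G (ν i)) :
    Integrable (fun y => G (y i)) (Measure.pi ν) := by
  rw [← pi_map_eval ν i] at hG
  exact (integrable_map_measure hGm.aestronglyMeasurable
    (measurable_pi_apply i).aemeasurable).mp hG

lemma core (n : ℕ) : ∀ (ν : Fin n → Measure ℝ) (_ : ∀ i, IsProbabilityMeasure (ν i))
    (c : Fin n → ℝ) (_ : ∀ i, 0 ≤ c i)
    (f : (Fin n → ℝ) → ℝ) (_ : Measurable f)
    (_ : ∀ x y, |f x - f y| ≤ ∑ i, c i * |x i - y i|)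
    (lam : ℝ) (_ : 0 < lam)
    (_ : ∀ i, Integrable (fun x => exp (lam * c i * x)) (ν i) ∧
        Integrable (fun x => exp (-(lam * c i) * x)) (ν i)),
    Integrable f (Measure.pi ν) ∧ Integrable (fun x => exp (lam * f x)) (Measure.pi ν) ∧
    ∫ x, exp (lam * f x) ∂(Measure.pi ν) ≤ exp (lam * ∫ x, f x ∂(Measure.pi ν)) *
      ∏ i, ((∫ x, exp (lam * c i * x) ∂(ν i)) * (∫ x, exp (-(lam * c i) * x) ∂(ν i))) := by
  induction n with
  | zero =>
    intro ν hprob c hc f hf hLip lam hlam hint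
    haveI := hprob
    have hfc : f = fun _ => f (fun _ => (0:ℝ)) := funext fun x => congrArg f (Subsingleton.elim _ _)
    rw [hfc]
    refine ⟨integrable_const _, integrable_const _, ?_⟩
    simp
  | succ n IH =>
    intro ν hprob c hc f hf hLip lam hlam hint
    haveI := hprob
    set ν' : Fin n → Measure ℝ := fun j => ν ((0 : Fin (n+1)).succAbove j) with hν'
    haveI : ∀ j, IsProbabilityMeasure (ν' j) := fun j => hprob _
    set c' : Fin n → ℝ := fun j => c ((0 : Fin (n+1)).succAbove j) with hcp
    set ν₀ := ν 0 with hν₀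
    set e := MeasurableEquiv.piFinSuccAbove (fun _ : Fin (n+1) => ℝ) 0 with he
    have hmp : MeasurePreserving e (Measure.pi ν) (ν₀.prod (Measure.pi ν')) :=
      measurePreserving_piFinSuccAbove ν 0
    have hesymm : ∀ p : ℝ × (Fin n → ℝ), e.symm p = (0 : Fin (n+1)).insertNth p.1 p.2 := by
      intro p
      simp [he, MeasurableEquiv.piFinSuccAbove, Fin.insertNthEquiv]
    set F : ℝ × (Fin n → ℝ) → ℝ := fun p => f (e.symm p) with hF
    have hFins : ∀ a y, F (a, y) = f ((0 : Fin (n+1)).insertNth a y) :=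
      fun a y => congrArg f (hesymm (a, y))
    have hFmeas : Measurable F := hf.comp e.symm.measurable
    have hLip0 : ∀ y a b, |F (a, y) - F (b, y)| ≤ c 0 * |a - b| := by
      intro y a b
      rw [hFins, hFins]
      refine (hLip _ _).trans ?_
      rw [Fin.sum_univ_succAbove _ 0]
      simp [Fin.insertNth_apply_same, Fin.insertNth_apply_succAbove]
    have hLipR : ∀ a y y', |F (a, y) - F (a, y')| ≤ ∑ j, c' j * |y j - y' j| := by
      intro a y y'
      rw [hFins, hFins]
      refine (hLip _ _).trans ?_
      rw [Fin.sum_univ_succAbove _ 0]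
      simp [Fin.insertNth_apply_same, Fin.insertNth_apply_succAbove, hcp]
    have hone : ∀ y, Integrable (fun a => F (a, y)) ν₀ ∧
        Integrable (fun a => exp (lam * F (a, y))) ν₀ ∧
        ∫ a, exp (lam * F (a, y)) ∂ν₀ ≤ exp (lam * ∫ a, F (a, y) ∂ν₀) *
          ((∫ x, exp (lam * c 0 * x) ∂ν₀) * (∫ x, exp (-(lam * c 0) * x) ∂ν₀)) := by
      intro y
      exact oneDim ν₀ (c 0) lam (hc 0) hlam _
        (hFmeas.comp (measurable_id.prodMk measurable_const))
        (fun a b => hLip0 y a b) (hint 0).1 (hint 0).2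
    set g : (Fin n → ℝ) → ℝ := fun y => ∫ a, F (a, y) ∂ν₀ with hg
    have hgsm : StronglyMeasurable g := hFmeas.stronglyMeasurable.integral_prod_left'
    have hgLip : ∀ y y', |g y - g y'| ≤ ∑ j, c' j * |y j - y' j| := by
      intro y y'
      rw [hg]
      simp only []
      rw [← integral_sub (hone y).1 (hone y').1]
      have h6 : |∫ a, (F (a,y) - F (a,y')) ∂ν₀| ≤ ∫ a, |F (a,y) - F (a,y')| ∂ν₀ := by
        simpa [Real.norm_eq_abs] using
          norm_integral_le_integral_norm (fun a => F (a,y) - F (a,y')) (μ := ν₀)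
      refine h6.trans ?_
      calc ∫ a, |F (a,y) - F (a,y')| ∂ν₀
          ≤ ∫ _a, (∑ j, c' j * |y j - y' j|) ∂ν₀ :=
            integral_mono ((hone y).1.sub (hone y').1).abs (integrable_const _)
              (fun a => hLipR a y y')
        _ = ∑ j, c' j * |y j - y' j| := by simp
    have hIH := IH ν' (fun j => hprob _) c' (fun j => hc _) g hgsm.measurable hgLip
      lam hlam (fun j => hint _)
    obtain ⟨hIntg, hIntexpg, hboundg⟩ := hIH
    set Mp0 := ∫ x, exp (lam * c 0 * x) ∂ν₀ with hMp0d
    set Mm0 := ∫ x, exp (-(lam * c 0) * x) ∂ν₀ with hMm0d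
    have hMp0 : 0 ≤ Mp0 := integral_nonneg fun x => (exp_pos _).le
    have hMm0 : 0 ≤ Mm0 := integral_nonneg fun x => (exp_pos _).le
    have hIntF : Integrable F (ν₀.prod (Measure.pi ν')) := by
      refine (integrable_prod_iff' hFmeas.aestronglyMeasurable).mpr ⟨?_, ?_⟩
      · exact ae_of_all _ fun y => (hone y).1
      · have habs' : ∀ j : Fin n, Integrable (fun y : Fin n → ℝ => c' j * |y j|)
            (Measure.pi ν') := by
          intro j
          refine integrable_eval ν' j (fun x => c' j * |x|) (measurable_id.abs.const_mul _) ?_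
          refine Integrable.mono' (((hint ((0:Fin (n+1)).succAbove j)).1.add
              (hint ((0:Fin (n+1)).succAbove j)).2).div_const lam)
            ((measurable_id.abs.const_mul _).aestronglyMeasurable) (ae_of_all _ fun x => ?_)
          rw [Real.norm_eq_abs, abs_of_nonneg (mul_nonneg (hc ((0:Fin (n+1)).succAbove j))
            (abs_nonneg x)), le_div_iff₀ hlam]
          calc c' j * |x| * lam = lam * c' j * |x| := by ring
            _ ≤ exp (lam * c' j * x) + exp (-(lam * c' j * x)) := mul_abs_le' _ x
            _ = exp (lam * c' j * x) + exp (-(lam * c' j) * x) := by rw [neg_mul]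
        have hbound : Integrable (fun y : Fin n → ℝ =>
            (∫ a, |F (a, fun _ => 0)| ∂ν₀) + ∑ j, c' j * |y j|) (Measure.pi ν') :=
          (integrable_const _).add (integrable_finset_sum _ (fun j _ => habs' j))
        refine Integrable.mono' hbound
          ((hFmeas.stronglyMeasurable.norm.integral_prod_left').aestronglyMeasurable)
          (ae_of_all _ fun y => ?_)
        rw [Real.norm_eq_abs, abs_of_nonneg (integral_nonneg fun a => norm_nonneg _)]
        have hptw : ∀ a : ℝ, ‖F (a, y)‖ ≤ |F (a, fun _ => 0)| + ∑ j, c' j * |y j| := by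
          intro a
          rw [Real.norm_eq_abs]
          have h3 := hLipR a y (fun _ => 0)
          have h4 : |F (a,y)| - |F (a, fun _ => 0)| ≤ |F (a,y) - F (a, fun _ => 0)| :=
            abs_sub_abs_le_abs_sub _ _
          simp only [sub_zero] at h3
          linarith
        calc ∫ a, ‖F (a, y)‖ ∂ν₀
            ≤ ∫ a, (|F (a, fun _ => 0)| + ∑ j, c' j * |y j|) ∂ν₀ :=
              integral_mono (hone y).1.norm (((hone _).1.abs).add (integrable_const _)) hptw
          _ = (∫ a, |F (a, fun _ => 0)| ∂ν₀) + ∑ j, c' j * |y j| := by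
              rw [integral_add ((hone _).1.abs) (integrable_const _)]; simp
    have hIntexpF : Integrable (fun p => exp (lam * F p)) (ν₀.prod (Measure.pi ν')) := by
      refine (integrable_prod_iff' ((hFmeas.const_mul lam).exp.aestronglyMeasurable)).mpr
        ⟨ae_of_all _ fun y => (hone y).2.1, ?_⟩
      refine Integrable.mono' (hIntexpg.mul_const (Mp0 * Mm0))
        (((hFmeas.const_mul lam).exp.stronglyMeasurable.norm.integral_prod_left').aestronglyMeasurable)
        (ae_of_all _ fun y => ?_)
      rw [Real.norm_eq_abs, abs_of_nonneg (integral_nonneg fun a => norm_nonneg _)]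
      calc ∫ a, ‖exp (lam * F (a, y))‖ ∂ν₀ = ∫ a, exp (lam * F (a, y)) ∂ν₀ := by
            congr 1; funext a; rw [Real.norm_eq_abs, abs_of_pos (exp_pos _)]
        _ ≤ exp (lam * g y) * (Mp0 * Mm0) := (hone y).2.2
    have hfe : ∀ x, F (e x) = f x := fun x => congrArg f (e.symm_apply_apply x)
    have hIntf : Integrable f (Measure.pi ν) := by
      have h5 := (hmp.integrable_comp_emb e.measurableEmbedding (g := F)).mpr hIntF
      rwa [show F ∘ e = f from funext fun x => hfe x] at h5
    have hIntexpf : Integrable (fun x => exp (lam * f x)) (Measure.pi ν) := by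
      have h5 := (hmp.integrable_comp_emb e.measurableEmbedding
        (g := fun p => exp (lam * F p))).mpr hIntexpF
      rwa [show (fun p => exp (lam * F p)) ∘ e = fun x => exp (lam * f x) from
        funext fun x => by simp only [Function.comp_apply, hfe]] at h5
    have hIf : ∫ x, f x ∂(Measure.pi ν) = ∫ y, g y ∂(Measure.pi ν') := by
      calc ∫ x, f x ∂(Measure.pi ν) = ∫ x, F (e x) ∂(Measure.pi ν) := by
            congr 1; funext x; rw [hfe]
        _ = ∫ p, F p ∂(ν₀.prod (Measure.pi ν')) := hmp.integral_comp e.measurableEmbedding F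
        _ = ∫ y, ∫ a, F (a, y) ∂ν₀ ∂(Measure.pi ν') := integral_prod_symm F hIntF
    have hIexp : ∫ x, exp (lam * f x) ∂(Measure.pi ν)
        = ∫ y, ∫ a, exp (lam * F (a,y)) ∂ν₀ ∂(Measure.pi ν') := by
      calc ∫ x, exp (lam * f x) ∂(Measure.pi ν)
          = ∫ x, exp (lam * F (e x)) ∂(Measure.pi ν) := by
            congr 1; funext x; rw [hfe]
        _ = ∫ p, exp (lam * F p) ∂(ν₀.prod (Measure.pi ν')) :=
            hmp.integral_comp e.measurableEmbedding (fun p => exp (lam * F p))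
        _ = ∫ y, ∫ a, exp (lam * F (a,y)) ∂ν₀ ∂(Measure.pi ν') :=
            integral_prod_symm _ hIntexpF
    refine ⟨hIntf, hIntexpf, ?_⟩
    calc ∫ x, exp (lam * f x) ∂(Measure.pi ν)
        = ∫ y, ∫ a, exp (lam * F (a,y)) ∂ν₀ ∂(Measure.pi ν') := hIexp
      _ ≤ ∫ y, exp (lam * g y) * (Mp0 * Mm0) ∂(Measure.pi ν') :=
          integral_mono hIntexpF.integral_prod_right (hIntexpg.mul_const _)
            (fun y => (hone y).2.2)
      _ = (∫ y, exp (lam * g y) ∂(Measure.pi ν')) * (Mp0 * Mm0) := integral_mul_const _ _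
      _ ≤ (exp (lam * ∫ y, g y ∂(Measure.pi ν')) *
            ∏ j, ((∫ x, exp (lam * c' j * x) ∂(ν' j)) *
              (∫ x, exp (-(lam * c' j) * x) ∂(ν' j)))) * (Mp0 * Mm0) :=
          mul_le_mul_of_nonneg_right hboundg (mul_nonneg hMp0 hMm0)
      _ = exp (lam * ∫ x, f x ∂(Measure.pi ν)) *
            ∏ i, ((∫ x, exp (lam * c i * x) ∂(ν i)) * (∫ x, exp (-(lam * c i) * x) ∂(ν i))) := by
          rw [hIf, Fin.prod_univ_succAbove (fun i => (∫ x, exp (lam * c i * x) ∂(ν i)) *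
            (∫ x, exp (-(lam * c i) * x) ∂(ν i))) 0]
          ring

/-- Chernoff-type concentration for coordinate-Lipschitz functionals of
independent random variables: `P[f(X) − E f(X) > t] ≤ exp(−λt + Σ_i φ_i(λ c_i))`. -/
theorem stmt5
    {Ω : Type*} [MeasurableSpace Ω] (μ : Measure Ω) [IsProbabilityMeasure μ]
    (n : ℕ) (X : Fin n → Ω → ℝ)
    (hmeas : ∀ i, Measurable (X i))
    (hindep : iIndepFun X μ)
    (φ : Fin n → ℝ → ℝ)
    (hφ : ∀ i lam, φ i lam =
      log (∫ ω, exp (lam * X i ω) ∂μ) + log (∫ ω, exp (-lam * X i ω) ∂μ))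
    (hdom : ∀ i, ∃ ε > 0, ∀ lam : ℝ, |lam| < ε →
      Integrable (fun ω => exp (lam * X i ω)) μ)
    (c : Fin n → ℝ) (hc : ∀ i, 0 ≤ c i)
    (f : (Fin n → ℝ) → ℝ) (hf : Measurable f)
    (hLip : ∀ x y : Fin n → ℝ, |f x - f y| ≤ ∑ i, c i * |x i - y i|)
    (lam : ℝ) (hlam : 0 ≤ lam)
    (hlamdom : ∀ i, Integrable (fun ω => exp (lam * c i * X i ω)) μ ∧
      Integrable (fun ω => exp (-(lam * c i) * X i ω)) μ)
    (t : ℝ) (ht : 0 < t) :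
    (μ {ω | t < f (fun i => X i ω) - ∫ ω', f (fun i => X i ω') ∂μ}).toReal ≤
      exp (-(lam * t) + ∑ i, φ i (lam * c i)) := by
  rcases hlam.eq_or_lt with h0 | hpos
  · -- trivial case lam = 0
    have hφ0 : ∀ i, φ i 0 = 0 := by
      intro i
      rw [hφ]
      simp
    have h1 : (μ {ω | t < f (fun i => X i ω) - ∫ ω', f (fun i => X i ω') ∂μ}).toReal ≤ 1 := by
      rw [show (1:ℝ) = (1:ℝ≥0∞).toReal by simp]
      exact ENNReal.toReal_mono ENNReal.one_ne_top prob_le_one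
    refine h1.trans ?_
    rw [← h0]
    simp [hφ0]
  · -- main case lam > 0
    set T : Ω → Fin n → ℝ := fun ω i => X i ω with hT
    have hTmeas : Measurable T := measurable_pi_lambda _ fun i => hmeas i
    set ν : Fin n → Measure ℝ := fun i => μ.map (X i) with hν
    haveI hprob : ∀ i, IsProbabilityMeasure (ν i) :=
      fun i => Measure.isProbabilityMeasure_map (hmeas i).aemeasurable
    have hmapT : μ.map T = Measure.pi ν := by
      refine (Measure.pi_eq fun s hs => ?_).symm
      rw [Measure.map_apply hTmeas (MeasurableSet.univ_pi hs)]
      have hpre : T ⁻¹' Set.pi Set.univ s = ⋂ i ∈ Finset.univ, X i ⁻¹' s i := by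
        ext ω; simp [hT, Set.mem_pi]
      rw [hpre, hindep.measure_inter_preimage_eq_mul Finset.univ (fun i _ => hs i)]
      refine Finset.prod_congr rfl fun i _ => ?_
      rw [hν]
      rw [Measure.map_apply (hmeas i) (hs i)]
    -- transfer integrability to ν
    have hintν : ∀ i, Integrable (fun x => exp (lam * c i * x)) (ν i) ∧
        Integrable (fun x => exp (-(lam * c i) * x)) (ν i) := by
      intro i
      constructor
      · exact (integrable_map_measure ((measurable_const.mul measurable_id).exp.aestronglyMeasurable)
          (hmeas i).aemeasurable).mpr (hlamdom i).1
      · exact (integrable_map_measure ((measurable_const.mul measurable_id).exp.aestronglyMeasurable)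
          (hmeas i).aemeasurable).mpr (hlamdom i).2
    obtain ⟨hIntf, hIntexpf, hbound⟩ := core n ν hprob c hc f hf hLip lam hpos hintν
    set m := ∫ x, f x ∂(Measure.pi ν) with hm
    have hmμ : ∫ ω', f (fun i => X i ω') ∂μ = m := by
      rw [hm, ← hmapT, integral_map hTmeas.aemeasurable hf.aestronglyMeasurable]
    -- the moment integrals over ν equal those over μ
    have hMp : ∀ i, ∫ x, exp (lam * c i * x) ∂(ν i) = ∫ ω, exp (lam * c i * X i ω) ∂μ := by
      intro i
      exact integral_map (hmeas i).aemeasurable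
        ((measurable_const.mul measurable_id).exp.aestronglyMeasurable)
    have hMm : ∀ i, ∫ x, exp (-(lam * c i) * x) ∂(ν i) = ∫ ω, exp (-(lam * c i) * X i ω) ∂μ := by
      intro i
      exact integral_map (hmeas i).aemeasurable
        ((measurable_const.mul measurable_id).exp.aestronglyMeasurable)
    -- measure transfer
    have hsetmeas : MeasurableSet {x : Fin n → ℝ | t ≤ f x - m} :=
      measurableSet_le measurable_const (hf.sub measurable_const)
    have hset : μ {ω | t < f (fun i => X i ω) - ∫ ω', f (fun i => X i ω') ∂μ}
        ≤ Measure.pi ν {x | t ≤ f x - m} := by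
      rw [← hmapT, Measure.map_apply hTmeas hsetmeas]
      refine measure_mono fun ω hω => ?_
      simp only [Set.mem_setOf_eq, hmμ] at hω
      exact Set.mem_preimage.mpr (le_of_lt hω)
    -- Chernoff on pi ν
    haveI : IsProbabilityMeasure (Measure.pi ν) := by infer_instance
    have hintmgf : Integrable (fun x => exp (lam * (f x - m))) (Measure.pi ν) := by
      have heq : (fun x => exp (lam * (f x - m)))
          = fun x => exp (-(lam * m)) * exp (lam * f x) := by
        funext x; rw [← Real.exp_add]; ring_nf
      rw [heq]
      exact hIntexpf.const_mul _
    have hchern := measure_ge_le_exp_mul_mgf (μ := Measure.pi ν) (X := fun x => f x - m)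
      (t := lam) t hpos.le hintmgf
    have hmgf : mgf (fun x => f x - m) (Measure.pi ν) lam ≤
        ∏ i, ((∫ x, exp (lam * c i * x) ∂(ν i)) * (∫ x, exp (-(lam * c i) * x) ∂(ν i))) := by
      have h1 : mgf (fun x => f x - m) (Measure.pi ν) lam
          = exp (-(lam * m)) * ∫ x, exp (lam * f x) ∂(Measure.pi ν) := by
        rw [mgf, ← integral_const_mul]
        congr 1; funext x
        rw [← Real.exp_add]; ring_nf
      rw [h1]
      calc exp (-(lam * m)) * ∫ x, exp (lam * f x) ∂(Measure.pi ν)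
          ≤ exp (-(lam * m)) * (exp (lam * m) *
            ∏ i, ((∫ x, exp (lam * c i * x) ∂(ν i)) * (∫ x, exp (-(lam * c i) * x) ∂(ν i)))) :=
            mul_le_mul_of_nonneg_left hbound (exp_pos _).le
        _ = ∏ i, ((∫ x, exp (lam * c i * x) ∂(ν i)) * (∫ x, exp (-(lam * c i) * x) ∂(ν i))) := by
            rw [← mul_assoc, ← Real.exp_add]; simp
    -- identify the RHS
    have hRHS : exp (-(lam * t) + ∑ i, φ i (lam * c i)) = exp (-lam * t) *
        ∏ i, ((∫ x, exp (lam * c i * x) ∂(ν i)) * (∫ x, exp (-(lam * c i) * x) ∂(ν i))) := by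
      rw [Real.exp_add, Real.exp_sum, neg_mul]
      congr 1
      refine Finset.prod_congr rfl fun i _ => ?_
      have hp : (0:ℝ) < ∫ ω, exp (lam * c i * X i ω) ∂μ :=
        mgf_pos (μ := μ) (X := X i) (t := lam * c i) (hlamdom i).1
      have hmneg : (0:ℝ) < ∫ ω, exp (-(lam * c i) * X i ω) ∂μ :=
        mgf_pos (μ := μ) (X := X i) (t := -(lam * c i)) (hlamdom i).2
      rw [hφ, Real.exp_add, Real.exp_log hp, Real.exp_log hmneg, hMp, hMm]
    calc (μ {ω | t < f (fun i => X i ω) - ∫ ω', f (fun i => X i ω') ∂μ}).toReal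
        ≤ (Measure.pi ν {x | t ≤ f x - m}).toReal :=
          ENNReal.toReal_mono (measure_ne_top _ _) hset
      _ ≤ exp (-lam * t) * mgf (fun x => f x - m) (Measure.pi ν) lam := hchern
      _ ≤ exp (-lam * t) *
          ∏ i, ((∫ x, exp (lam * c i * x) ∂(ν i)) * (∫ x, exp (-(lam * c i) * x) ∂(ν i))) :=
          mul_le_mul_of_nonneg_left hmgf (exp_pos _).le
      _ = exp (-(lam * t) + ∑ i, φ i (lam * c i)) := hRHS.symm
end

section
/- Lipschitz dependence of the log-capacity on a single coupling: in the disordered CWP model, if two coupling arrays J and J' differ only in the single entry (k,l), then |ln(Z^J·cap^J(A,B)) − ln(Z^{J'}·cap^{J'}(A,B))| ≤ (β/N)·|J_{kl} − J'_{kl}| for all nonempty disjoint A, B ⊂ S_N. -/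
open Real

/-- Lipschitz dependence of the log-capacity of the disordered Curie–Weiss–Potts
model on a single coupling: if the arrays `J`, `J'` differ only in the entry
`kl`, then `|ln(Z^J·cap^J(A,B)) − ln(Z^{J'}·cap^{J'}(A,B))| ≤ (β/N)|J_{kl} − J'_{kl}|`. -/
theorem stmt13
    (q N : ℕ) (hq : 2 ≤ q) (hN : 2 ≤ N) (β : ℝ) (hβ : 0 < β)
    (J J' : {p : Fin N × Fin N // p.1 < p.2} → ℝ)
    (kl : {p : Fin N × Fin N // p.1 < p.2})
    (hdiff : ∀ p, p ≠ kl → J p = J' p)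
    (A B : Set (Fin N → Fin q))
    (hA : A.Nonempty) (hB : B.Nonempty) (hAB : Disjoint A B) :
    let Ham : ({p : Fin N × Fin N // p.1 < p.2} → ℝ) → (Fin N → Fin q) → ℝ :=
      fun K σ => -(1 / (N : ℝ)) *
        ∑ p : {p : Fin N × Fin N // p.1 < p.2},
          (if σ p.1.1 = σ p.1.2 then K p else 0)
    let ZE : ({p : Fin N × Fin N // p.1 < p.2} → ℝ) → ((Fin N → Fin q) → ℝ) → ℝ :=
      fun K f => (1 / (2 * (N : ℝ) * q)) * ∑ σ : Fin N → Fin q, ∑ η : Fin N → Fin q,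
        if σ ≠ η ∧ ∃ k : Fin N, ∀ i : Fin N, i ≠ k → σ i = η i then
          exp (-(β * max (Ham K σ) (Ham K η))) * (f σ - f η) ^ 2
        else 0
    let Zcap : ({p : Fin N × Fin N // p.1 < p.2} → ℝ) → ℝ := fun K =>
      sInf {x : ℝ | ∃ f : (Fin N → Fin q) → ℝ, (∀ σ, 0 ≤ f σ ∧ f σ ≤ 1) ∧
        (∀ σ ∈ A, f σ = 1) ∧ (∀ σ ∈ B, f σ = 0) ∧ x = ZE K f}
    |Real.log (Zcap J) - Real.log (Zcap J')| ≤ (β / N) * |J kl - J' kl| := by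
  intro Ham ZE Zcap
  classical
  have hNpos : (0:ℝ) < N := by exact_mod_cast (by omega : 0 < N)
  have hqpos : (0:ℝ) < q := by exact_mod_cast (by omega : 0 < q)
  set Δ : ℝ := |J kl - J' kl| with hΔdef
  have hΔnn : 0 ≤ Δ := abs_nonneg _
  set c : ℝ := exp (β * (Δ / N)) with hcdef
  have hcpos : 0 < c := exp_pos _
  -- Hamiltonian perturbation bound
  have hHam : ∀ K K' : {p : Fin N × Fin N // p.1 < p.2} → ℝ,
      (∀ p, p ≠ kl → K p = K' p) → |K kl - K' kl| ≤ Δ →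
      ∀ σ : Fin N → Fin q, Ham K' σ - Δ / N ≤ Ham K σ := by
    intro K K' hK hKΔ σ
    have h1 : Ham K σ - Ham K' σ =
        -(1/(N:ℝ)) * (if σ kl.1.1 = σ kl.1.2 then K kl - K' kl else 0) := by
      show -(1/(N:ℝ)) * ∑ p : {p : Fin N × Fin N // p.1 < p.2},
          (if σ p.1.1 = σ p.1.2 then K p else 0)
        - -(1/(N:ℝ)) * ∑ p : {p : Fin N × Fin N // p.1 < p.2},
          (if σ p.1.1 = σ p.1.2 then K' p else 0) = _
      rw [← mul_sub, ← Finset.sum_sub_distrib]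
      congr 1
      rw [Finset.sum_eq_single kl]
      · split <;> simp
      · intro p _ hp
        rw [hK p hp]
        split <;> simp
      · intro h; exact absurd (Finset.mem_univ kl) h
    have h2 : |Ham K σ - Ham K' σ| ≤ Δ / N := by
      rw [h1, abs_mul]
      have : |(if σ kl.1.1 = σ kl.1.2 then K kl - K' kl else 0)| ≤ Δ := by
        split
        · exact hKΔ
        · simpa using hΔnn
      calc |(-(1/(N:ℝ)))| * |(if σ kl.1.1 = σ kl.1.2 then K kl - K' kl else 0)|
          ≤ (1/(N:ℝ)) * Δ := by
            apply mul_le_mul _ this (abs_nonneg _) (by positivity)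
            rw [abs_neg, abs_of_nonneg (by positivity)]
        _ = Δ / N := by ring
    have := (abs_le.mp h2).1
    linarith
  -- termwise Dirichlet-form comparison
  have hZE : ∀ K K' : {p : Fin N × Fin N // p.1 < p.2} → ℝ,
      (∀ p, p ≠ kl → K p = K' p) → |K kl - K' kl| ≤ Δ →
      ∀ f : (Fin N → Fin q) → ℝ, ZE K f ≤ c * ZE K' f := by
    intro K K' hK hKΔ f
    have hterm : ∀ σ η : Fin N → Fin q,
        (if σ ≠ η ∧ ∃ k : Fin N, ∀ i : Fin N, i ≠ k → σ i = η i then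
          exp (-(β * max (Ham K σ) (Ham K η))) * (f σ - f η) ^ 2 else 0)
        ≤ c * (if σ ≠ η ∧ ∃ k : Fin N, ∀ i : Fin N, i ≠ k → σ i = η i then
          exp (-(β * max (Ham K' σ) (Ham K' η))) * (f σ - f η) ^ 2 else 0) := by
      intro σ η
      split
      · have hmax : max (Ham K' σ) (Ham K' η) - Δ / N ≤ max (Ham K σ) (Ham K η) := by
          rcases max_cases (Ham K' σ) (Ham K' η) with ⟨h, _⟩ | ⟨h, _⟩ <;> rw [h]
          · exact le_trans (hHam K K' hK hKΔ σ) (le_max_left _ _)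
          · exact le_trans (hHam K K' hK hKΔ η) (le_max_right _ _)
        have hexp : exp (-(β * max (Ham K σ) (Ham K η)))
            ≤ c * exp (-(β * max (Ham K' σ) (Ham K' η))) := by
          rw [hcdef, ← Real.exp_add]
          apply Real.exp_le_exp.mpr
          nlinarith [hβ.le]
        rw [← mul_assoc]
        exact mul_le_mul_of_nonneg_right hexp (sq_nonneg _)
      · simp
    have hsum : (∑ σ : Fin N → Fin q, ∑ η : Fin N → Fin q,
        if σ ≠ η ∧ ∃ k : Fin N, ∀ i : Fin N, i ≠ k → σ i = η i then
          exp (-(β * max (Ham K σ) (Ham K η))) * (f σ - f η) ^ 2 else 0)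
        ≤ c * ∑ σ : Fin N → Fin q, ∑ η : Fin N → Fin q,
        if σ ≠ η ∧ ∃ k : Fin N, ∀ i : Fin N, i ≠ k → σ i = η i then
          exp (-(β * max (Ham K' σ) (Ham K' η))) * (f σ - f η) ^ 2 else 0 := by
      rw [Finset.mul_sum]
      refine Finset.sum_le_sum fun σ _ => ?_
      rw [Finset.mul_sum]
      exact Finset.sum_le_sum fun η _ => hterm σ η
    show (1 / (2 * (N : ℝ) * q)) * _ ≤ c * ((1 / (2 * (N : ℝ) * q)) * _)
    calc (1 / (2 * (N : ℝ) * q)) * _ ≤ (1 / (2 * (N : ℝ) * q)) * (c * _) :=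
          mul_le_mul_of_nonneg_left hsum (by positivity)
      _ = c * ((1 / (2 * (N : ℝ) * q)) * _) := by ring
  -- ZE nonneg
  have hZEnn : ∀ K f, 0 ≤ ZE K f := by
    intro K f
    apply mul_nonneg (by positivity)
    apply Finset.sum_nonneg; intro σ _
    apply Finset.sum_nonneg; intro η _
    split
    · positivity
    · exact le_refl 0
  -- the admissible set
  have hSne : ∀ K, Set.Nonempty {x : ℝ | ∃ f : (Fin N → Fin q) → ℝ,
      (∀ σ, 0 ≤ f σ ∧ f σ ≤ 1) ∧
      (∀ σ ∈ A, f σ = 1) ∧ (∀ σ ∈ B, f σ = 0) ∧ x = ZE K f} := by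
    intro K
    refine ⟨ZE K (fun σ => if σ ∈ B then 0 else 1), fun σ => if σ ∈ B then 0 else 1, ?_, ?_, ?_, rfl⟩
    · intro σ; by_cases hσ : σ ∈ B <;> simp [hσ]
    · intro σ hσ
      have : σ ∉ B := fun hB' => (Set.disjoint_left.mp hAB hσ) hB'
      simp [this]
    · intro σ hσ; simp [hσ]
  have hSbdd : ∀ K, BddBelow {x : ℝ | ∃ f : (Fin N → Fin q) → ℝ,
      (∀ σ, 0 ≤ f σ ∧ f σ ≤ 1) ∧
      (∀ σ ∈ A, f σ = 1) ∧ (∀ σ ∈ B, f σ = 0) ∧ x = ZE K f} := by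
    intro K
    refine ⟨0, fun x hx => ?_⟩
    obtain ⟨f, _, _, _, rfl⟩ := hx
    exact hZEnn K f
  have hZcapnn : ∀ K, 0 ≤ Zcap K := fun K => le_csInf (hSne K) fun x hx => by
    obtain ⟨f, _, _, _, rfl⟩ := hx; exact hZEnn K f
  -- main comparison
  have hcomp : ∀ K K' : {p : Fin N × Fin N // p.1 < p.2} → ℝ,
      (∀ p, p ≠ kl → K p = K' p) → |K kl - K' kl| ≤ Δ →
      Zcap K ≤ c * Zcap K' := by
    intro K K' hK hKΔ
    rw [← div_le_iff₀' hcpos]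
    apply le_csInf (hSne K')
    intro x hx
    obtain ⟨f, hf1, hf2, hf3, rfl⟩ := hx
    rw [div_le_iff₀' hcpos]
    calc Zcap K ≤ ZE K f := csInf_le (hSbdd K) ⟨f, hf1, hf2, hf3, rfl⟩
      _ ≤ c * ZE K' f := hZE K K' hK hKΔ f
  have h1 : Zcap J ≤ c * Zcap J' := hcomp J J' hdiff le_rfl
  have h2 : Zcap J' ≤ c * Zcap J := by
    apply hcomp J' J (fun p hp => (hdiff p hp).symm)
    rw [abs_sub_comm]
  have hgoal : (β / N) * Δ = β * (Δ / N) := by ring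
  rcases eq_or_lt_of_le (hZcapnn J) with hz | hz
  · have hz' : Zcap J' = 0 := le_antisymm (by rw [← hz] at h2; simpa using h2) (hZcapnn J')
    rw [← hz, hz']
    simp
    positivity
  · have hz' : 0 < Zcap J' := by
      by_contra h
      push_neg at h
      have : Zcap J' = 0 := le_antisymm h (hZcapnn J')
      rw [this, mul_zero] at h1
      linarith
    rw [abs_sub_le_iff]
    constructor
    · have := Real.log_le_log hz h1
      rw [Real.log_mul (ne_of_gt hcpos) (ne_of_gt hz'), Real.log_exp] at this
      linarith [hgoal]
    · have := Real.log_le_log hz' h2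
      rw [Real.log_mul (ne_of_gt hcpos) (ne_of_gt hz), Real.log_exp] at this
      linarith [hgoal]
end
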